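/- arXiv:math/0102229 — 5 statements merged into one kernel-verified Lean document; each statement's English description precedes it below -/
import Mathlib

section
/- Let A be a C*-algebra, x ∈ A with ‖x x* x − x‖ < δ (δ small), y = x·f(x*x) as above. Then y − x lies in the closed two-sided ideal of C*(x) generated by x x* x − x, and ‖y − x‖ → 0 as ‖x x* x − x‖ → 0; more precisely ‖y − x‖ is bounded by a universal function of ‖x x* x − x‖ tending to 0 at 0. -/
/-!
With `d = x x* x - x` and `a = x* x` one has `d* d = a (a - 1)²`, so every `t` in the spectrum of
`a` satisfies `t (t - 1)² ≤ ‖d‖²`; for `‖d‖ < 1/4` this excludes `t = 1/2`, the only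
discontinuity of `f`. Moreover `f(t) = 1 + (t - 1) h(t)` for an explicit `h` with `|h| ≤ 2` that is
continuous away from `1/2`, so `y - x = x (f(a) - 1) = x (a - 1) h(a) = d h(a)`. This exhibits
`y - x` in the ideal generated by `d` and gives `‖y - x‖ ≤ 2 ‖d‖`.
-/

/-- The function `f(t) = t^{-1/2} · χ_{(1/2,∞)}(t)`. -/
noncomputable def spielbergF : ℝ → ℝ := fun t => if 1/2 < t then (Real.sqrt t)⁻¹ else 0

/-- `(f(t) - 1) / (t - 1)`, written out branchwise so that it stays continuous at `t = 1`. -/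
noncomputable def spielbergH : ℝ → ℝ := fun t =>
  if 1/2 < t then -(Real.sqrt t * (1 + Real.sqrt t))⁻¹ else (1 - t)⁻¹

lemma continuousAt_ite_of_ne {f g : ℝ → ℝ} {c t : ℝ} (ht : t ≠ c)
    (hf : c < t → ContinuousAt f t) (hg : t < c → ContinuousAt g t) :
    ContinuousAt (fun u => if c < u then f u else g u) t := by
  rcases ht.lt_or_gt with h | h
  · refine (hg h).congr ?_
    filter_upwards [Iio_mem_nhds h] with u (hu : u < c)
    rw [if_neg hu.not_gt]
  · refine (hf h).congr ?_
    filter_upwards [Ioi_mem_nhds h] with u (hu : c < u)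
    rw [if_pos hu]

lemma continuousAt_spielbergF {t : ℝ} (ht : t ≠ 1/2) : ContinuousAt spielbergF t :=
  continuousAt_ite_of_ne ht
    (fun _ => (Real.continuous_sqrt.continuousAt).inv₀ (by positivity)) fun _ => continuousAt_const

lemma continuousAt_spielbergH {t : ℝ} (ht : t ≠ 1/2) : ContinuousAt spielbergH t :=
  continuousAt_ite_of_ne ht
    (fun _ => by fun_prop (disch := positivity))
    fun h => by
      have : 1 - t ≠ 0 := by linarith
      fun_prop (disch := assumption)

lemma spielbergF_eq (t : ℝ) : spielbergF t = 1 + (t - 1) * spielbergH t := by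
  unfold spielbergF spielbergH
  split_ifs with h
  · have hs : Real.sqrt t ^ 2 = t := Real.sq_sqrt (by linarith)
    have : Real.sqrt t ≠ 0 := by positivity
    field_simp
    linear_combination -hs
  · have : 1 - t ≠ 0 := by linarith
    field_simp
    ring

lemma abs_spielbergH_le (t : ℝ) : |spielbergH t| ≤ 2 := by
  unfold spielbergH
  split_ifs with h
  · have hs : Real.sqrt t ^ 2 = t := Real.sq_sqrt (by linarith)
    have hp : 1 / 2 ≤ Real.sqrt t * (1 + Real.sqrt t) := by nlinarith [Real.sqrt_nonneg t]
    rw [abs_neg, abs_of_pos (by positivity), inv_le_comm₀ (by positivity) (by norm_num)]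
    linarith
  · rw [abs_of_pos (inv_pos.2 (by linarith)), inv_le_comm₀ (by linarith) (by norm_num)]
    linarith

section

variable {A : Type*} [CStarAlgebra A]

lemma star_mul_self_mul_star_mul_sub (x : A) :
    star (x * star x * x - x) * (x * star x * x - x) = star x * x * (star x * x - 1) ^ 2 := by
  simp only [star_sub, star_mul, star_star]
  noncomm_ring

lemma abs_mul_sub_one_sq_le_of_mem_spectrum (x : A) {t : ℝ} (ht : t ∈ spectrum ℝ (star x * x)) :
    |t * (t - 1) ^ 2| ≤ ‖x * star x * x - x‖ ^ 2 := by
  have hcfc : cfc (fun t : ℝ => t * (t - 1) ^ 2) (star x * x)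
      = star (x * star x * x - x) * (x * star x * x - x) := by
    rw [star_mul_self_mul_star_mul_sub, cfc_mul .., cfc_pow .., cfc_sub .., cfc_id' .., cfc_const_one ..]
  have := norm_apply_le_norm_cfc (fun t : ℝ => t * (t - 1) ^ 2) (star x * x) ht
  rwa [hcfc, CStarRing.norm_star_mul_self, Real.norm_eq_abs, ← sq] at this

lemma half_notMem_spectrum_star_mul_self (x : A) (hd : ‖x * star x * x - x‖ < 1 / 4) :
    (1 / 2 : ℝ) ∉ spectrum ℝ (star x * x) := fun h => by
  have key := abs_mul_sub_one_sq_le_of_mem_spectrum x h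
  norm_num at key
  nlinarith [norm_nonneg (x * star x * x - x)]

lemma mul_cfc_spielbergF_sub_self (x : A) (hspec : (1 / 2 : ℝ) ∉ spectrum ℝ (star x * x)) :
    x * cfc spielbergF (star x * x) - x = (x * star x * x - x) * cfc spielbergH (star x * x) := by
  have hH : ContinuousOn spielbergH (spectrum ℝ (star x * x)) := fun t ht =>
    (continuousAt_spielbergH (ne_of_mem_of_not_mem ht hspec)).continuousWithinAt
  have hF : cfc spielbergF (star x * x) = 1 + (star x * x - 1) * cfc spielbergH (star x * x) := by
    rw [show spielbergF = fun t => 1 + (t - 1) * spielbergH t from funext spielbergF_eq,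
      cfc_add .., cfc_const_one .., cfc_mul .., cfc_sub .., cfc_id' .., cfc_const_one ..]
  rw [hF]
  noncomm_ring

lemma norm_cfc_spielbergH_le (a : A) : ‖cfc spielbergH a‖ ≤ 2 :=
  norm_cfc_le (by norm_num) fun t _ => abs_spielbergH_le t

lemma cfc_star_mul_self_mem_elemental (f : ℝ → ℝ) (x : A) :
    cfc f (star x * x) ∈ StarAlgebra.elemental ℂ x :=
  cfc_mem (𝕜' := ℂ) (hs := StarAlgebra.elemental.isClosed ℂ x) f
    (mul_mem (star_mem (StarAlgebra.elemental.self_mem ℂ x)) (StarAlgebra.elemental.self_mem ℂ x))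

end

/-- Lemma 3.2 (iii) and (iv): `y − x` lies in the closed two-sided ideal of `C*(x)`
generated by `x x* x − x`, and `‖y − x‖` is bounded by a universal function of
`‖x x* x − x‖` tending to `0` at `0`. -/
theorem stmt_2 :
    ∃ g : ℝ → ℝ, Filter.Tendsto g (nhdsWithin 0 (Set.Ici 0)) (nhds 0) ∧
      ∀ (A : Type) [CStarAlgebra A], ∀ (x : A)
        (hx : x ∈ StarAlgebra.elemental ℂ x)
        (hd : x * star x * x - x ∈ StarAlgebra.elemental ℂ x)
        (hy : x * cfc spielbergF (star x * x) ∈ StarAlgebra.elemental ℂ x),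
        ‖x * star x * x - x‖ < 1 / 4 →
        ((⟨x * cfc spielbergF (star x * x), hy⟩ - ⟨x, hx⟩ : StarAlgebra.elemental ℂ x) ∈
          closure ((TwoSidedIdeal.span {(⟨x * star x * x - x, hd⟩ : StarAlgebra.elemental ℂ x)} :
            TwoSidedIdeal (StarAlgebra.elemental ℂ x)) : Set (StarAlgebra.elemental ℂ x))) ∧
        ‖x * cfc spielbergF (star x * x) - x‖ ≤ g ‖x * star x * x - x‖ := by
  refine ⟨fun s => s * 2, ?_, fun A _ x hx hd hy hsmall => ?_⟩
  · exact tendsto_nhdsWithin_of_tendsto_nhds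
      (by simpa using (continuous_mul_const (2 : ℝ)).tendsto 0)
  have hfactor := mul_cfc_spielbergF_sub_self x (half_notMem_spectrum_star_mul_self x hsmall)
  refine ⟨subset_closure ?_, ?_⟩
  · have hH := cfc_star_mul_self_mem_elemental spielbergH x
    have hsub : (⟨_, hy⟩ - ⟨x, hx⟩ : StarAlgebra.elemental ℂ x) = ⟨_, hd⟩ * ⟨_, hH⟩ :=
      Subtype.ext hfactor
    rw [hsub]
    exact TwoSidedIdeal.mul_mem_right _ _ _ (TwoSidedIdeal.subset_span rfl)
  · rw [hfactor]
    exact (norm_mul_le _ _).trans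
      (mul_le_mul_of_nonneg_left (norm_cfc_spielbergH_le _) (norm_nonneg _))
end

section
/- Let B be a C*-algebra, J a closed ideal, a, b ∈ B with a a partial isometry (a a* a = a), a*b ∈ J, and a*a − b*b ∈ J. Let h, k ∈ B be self-adjoint elements of an approximate unit construction with h² + k² = 1 and suppose h commutes with a, b, a*a, b*b modulo a set of small norm (quasi-centrality). Then for w = h a + k b one has w*w − a*a ∈ J, and modulo J and up to error tending to 0 along the approximate unit, w*w ≈ a*a. -/
section Aux

variable {B : Type*} [CStarAlgebra B]

/-- If `‖x‖ ≤ 1` then `‖x * y‖ ≤ ‖y‖`. -/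
lemma aux_bnd1 {x : B} (y : B) (hx : ‖x‖ ≤ 1) : ‖x * y‖ ≤ ‖y‖ := by
  calc ‖x * y‖ ≤ ‖x‖ * ‖y‖ := norm_mul_le _ _
    _ ≤ 1 * ‖y‖ := by gcongr
    _ = ‖y‖ := one_mul _

/-- The key algebraic identity. -/
lemma aux_key {a b h k : B} (hsh : star h = h) (hsk : star k = k)
    (hk2 : k * k = 1 - h * h) :
    star (h * a + k * b) * (h * a + k * b) - star a * a =
      (star a * h - h * star a) * (h * a)
      + h * ((star a * h - h * star a) * a)
      + -((star b * h - h * star b) * (h * b))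
      + -(h * ((star b * h - h * star b) * b))
      + -((star a * a - star b * b) - h * (h * (star a * a - star b * b)))
      + ((star a * h - h * star a) * (k * b)
          + h * ((star a * k - k * star a) * b)
          + h * (k * (star a * b)))
      + star ((star a * h - h * star a) * (k * b)
          + h * ((star a * k - k * star a) * b)
          + h * (k * (star a * b))) := by
  have expand : star (h * a + k * b) * (h * a + k * b) =
      star a * h * (h * a) + star a * h * (k * b) + star b * k * (h * a)
        + star b * k * (k * b) := by
    simp only [star_add, star_mul, hsh, hsk]
    noncomm_ring
  have e : star b * k * (k * b) = star b * b - star b * h * (h * b) := by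
    calc star b * k * (k * b) = star b * (k * k) * b := by noncomm_ring
      _ = star b * (1 - h * h) * b := by rw [hk2]
      _ = star b * b - star b * h * (h * b) := by noncomm_ring
  rw [expand, e]
  simp only [star_add, star_mul, star_sub, hsh, hsk, star_star]
  noncomm_ring

lemma aux_star_eq {a b h k : B} (hsh : star h = h) (hsk : star k = k) :
    star ((star a * h - h * star a) * (k * b)
        + h * ((star a * k - k * star a) * b)
        + h * (k * (star a * b))) =
      (star b * k) * (h * a - a * h)
      + (star b * (k * a - a * k)) * h
      + ((star b * a) * k) * h := by
  simp only [star_add, star_mul, star_sub, hsh, hsk, star_star]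

end Aux

set_option maxHeartbeats 1000000 in
/-- Lemma 3.6, case (i), asymptotic formula `w*w ≈ a*a` for `w = h a + k b`,
where `h` runs through a quasi-central approximate unit for the ideal `J`,
`k = (1 − h²)^{1/2}`, `a` is a partial isometry, `a*b ∈ J` and `a*a − b*b ∈ J`. -/
theorem stmt_4 {B : Type*} [CStarAlgebra B]
    (J : TwoSidedIdeal B) (hJ : IsClosed (J : Set B)) (a b : B)
    (ha : a * star a * a = a)
    (h1 : star a * b ∈ J) (h2 : star a * a - star b * b ∈ J)
    (hb : b * star b * b - b ∈ J) :
    ∀ ε > 0, ∃ δ > 0, ∀ h k : B, h ∈ J → IsSelfAdjoint h → IsSelfAdjoint k →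
      ‖h‖ ≤ 1 → ‖k‖ ≤ 1 → h ^ 2 + k ^ 2 = 1 →
      ‖h * a - a * h‖ ≤ δ → ‖h * b - b * h‖ ≤ δ →
      ‖k * a - a * k‖ ≤ δ → ‖k * b - b * k‖ ≤ δ →
      ‖star a * b - h * (star a * b)‖ ≤ δ →
      ‖(star a * a - star b * b) - h * (star a * a - star b * b)‖ ≤ δ →
      star (h * a + k * b) * (h * a + k * b) - star a * a ∈ J ∧
      ‖star (h * a + k * b) * (h * a + k * b) - star a * a‖ ≤ ε := by
  intro ε hε
  set m : B := star a * b with hm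
  set d : B := star a * a - star b * b with hd
  refine ⟨min (ε / (2 * (2 * ‖a‖ + 6 * ‖b‖ + 2))) ((ε / 4) ^ 2 / (2 * ‖m‖ + 1)),
    by positivity, ?_⟩
  set δ : ℝ := min (ε / (2 * (2 * ‖a‖ + 6 * ‖b‖ + 2))) ((ε / 4) ^ 2 / (2 * ‖m‖ + 1)) with hδ
  intro h k hhJ hsah hsak hhn hkn hsum dha dhb dka dkb dm dd
  have hδ0 : 0 < δ := by positivity
  have hsh : star h = h := hsah.star_eq
  have hsk : star k = k := hsak.star_eq
  have hk2 : k * k = 1 - h * h := by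
    have : k ^ 2 = 1 - h ^ 2 := eq_sub_of_add_eq' hsum
    calc k * k = k ^ 2 := (sq k).symm
      _ = 1 - h ^ 2 := this
      _ = 1 - h * h := by rw [sq]
  have key := aux_key (a := a) (b := b) hsh hsk hk2
  -- names for the pieces
  set E1 : B := (star a * h - h * star a) * (h * a) with hE1
  set E2 : B := h * ((star a * h - h * star a) * a) with hE2
  set E3 : B := -((star b * h - h * star b) * (h * b)) with hE3
  set E4 : B := -(h * ((star b * h - h * star b) * b)) with hE4
  set E5 : B := -(d - h * (h * d)) with hE5
  set E6 : B := (star a * h - h * star a) * (k * b) with hE6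
  set E7 : B := h * ((star a * k - k * star a) * b) with hE7
  set E8 : B := h * (k * m) with hE8
  -- commutator estimates
  have c1 : ‖star a * h - h * star a‖ ≤ δ := by
    have : star a * h - h * star a = star (h * a - a * h) := by
      simp [star_sub, star_mul, hsh]
    rw [this, norm_star]; exact dha
  have c2 : ‖star b * h - h * star b‖ ≤ δ := by
    have : star b * h - h * star b = star (h * b - b * h) := by
      simp [star_sub, star_mul, hsh]
    rw [this, norm_star]; exact dhb
  have c3 : ‖star a * k - k * star a‖ ≤ δ := by
    have : star a * k - k * star a = star (k * a - a * k) := by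
      simp [star_sub, star_mul, hsk]
    rw [this, norm_star]; exact dka
  -- membership in J
  have memJ : star (h * a + k * b) * (h * a + k * b) - star a * a ∈ J := by
    rw [key]
    have hE1m : E1 ∈ J := J.mul_mem_right _ _
      (J.sub_mem (J.mul_mem_left _ _ hhJ) (J.mul_mem_right _ _ hhJ))
    have hE2m : E2 ∈ J := J.mul_mem_right _ _ hhJ
    have hE3m : E3 ∈ J := J.neg_mem (J.mul_mem_right _ _
      (J.sub_mem (J.mul_mem_left _ _ hhJ) (J.mul_mem_right _ _ hhJ)))
    have hE4m : E4 ∈ J := J.neg_mem (J.mul_mem_right _ _ hhJ)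
    have hE5m : E5 ∈ J := J.neg_mem (J.sub_mem h2 (J.mul_mem_right _ _ hhJ))
    have hE6m : E6 ∈ J := J.mul_mem_right _ _
      (J.sub_mem (J.mul_mem_left _ _ hhJ) (J.mul_mem_right _ _ hhJ))
    have hE7m : E7 ∈ J := J.mul_mem_right _ _ hhJ
    have hE8m : E8 ∈ J := J.mul_mem_right _ _ hhJ
    have hstarm : star (E6 + E7 + E8) ∈ J := by
      rw [hE6, hE7, hE8, hm, aux_star_eq hsh hsk]
      refine J.add_mem (J.add_mem ?_ ?_) ?_
      · exact J.mul_mem_left _ _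
          (J.sub_mem (J.mul_mem_right _ _ hhJ) (J.mul_mem_left _ _ hhJ))
      · exact J.mul_mem_left _ _ hhJ
      · exact J.mul_mem_left _ _ hhJ
    exact J.add_mem (J.add_mem (J.add_mem (J.add_mem (J.add_mem (J.add_mem
      hE1m hE2m) hE3m) hE4m) hE5m) (J.add_mem (J.add_mem hE6m hE7m) hE8m)) hstarm
  refine ⟨memJ, ?_⟩
  -- norm bounds for the pieces
  have bE1 : ‖E1‖ ≤ δ * ‖a‖ := by
    calc ‖E1‖ ≤ ‖star a * h - h * star a‖ * ‖h * a‖ := norm_mul_le _ _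
      _ ≤ δ * ‖a‖ :=
        mul_le_mul c1 (aux_bnd1 a hhn) (norm_nonneg _) hδ0.le
  have bE2 : ‖E2‖ ≤ δ * ‖a‖ := by
    calc ‖E2‖ ≤ ‖(star a * h - h * star a) * a‖ := aux_bnd1 _ hhn
      _ ≤ ‖star a * h - h * star a‖ * ‖a‖ := norm_mul_le _ _
      _ ≤ δ * ‖a‖ := by gcongr
  have bE3 : ‖E3‖ ≤ δ * ‖b‖ := by
    rw [hE3, norm_neg]
    calc ‖(star b * h - h * star b) * (h * b)‖
        ≤ ‖star b * h - h * star b‖ * ‖h * b‖ := norm_mul_le _ _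
      _ ≤ δ * ‖b‖ :=
        mul_le_mul c2 (aux_bnd1 b hhn) (norm_nonneg _) hδ0.le
  have bE4 : ‖E4‖ ≤ δ * ‖b‖ := by
    rw [hE4, norm_neg]
    calc ‖h * ((star b * h - h * star b) * b)‖
        ≤ ‖(star b * h - h * star b) * b‖ := aux_bnd1 _ hhn
      _ ≤ ‖star b * h - h * star b‖ * ‖b‖ := norm_mul_le _ _
      _ ≤ δ * ‖b‖ := by gcongr
  have approx2 : ∀ x : B, ‖x - h * x‖ ≤ δ → ‖x - h * (h * x)‖ ≤ 2 * δ := by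
    intro x hx
    have e : x - h * (h * x) = (x - h * x) + h * (x - h * x) := by noncomm_ring
    calc ‖x - h * (h * x)‖ = ‖(x - h * x) + h * (x - h * x)‖ := by rw [e]
      _ ≤ ‖x - h * x‖ + ‖h * (x - h * x)‖ := norm_add_le _ _
      _ ≤ δ + δ := add_le_add hx ((aux_bnd1 _ hhn).trans hx)
      _ = 2 * δ := by ring
  have bE5 : ‖E5‖ ≤ 2 * δ := by
    rw [hE5, norm_neg]; exact approx2 d dd
  have bE6 : ‖E6‖ ≤ δ * ‖b‖ := by
    calc ‖E6‖ ≤ ‖star a * h - h * star a‖ * ‖k * b‖ := norm_mul_le _ _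
      _ ≤ δ * ‖b‖ :=
        mul_le_mul c1 (aux_bnd1 b hkn) (norm_nonneg _) hδ0.le
  have bE7 : ‖E7‖ ≤ δ * ‖b‖ := by
    calc ‖E7‖ ≤ ‖(star a * k - k * star a) * b‖ := aux_bnd1 _ hhn
      _ ≤ ‖star a * k - k * star a‖ * ‖b‖ := norm_mul_le _ _
      _ ≤ δ * ‖b‖ := by gcongr
  -- the square-root estimate for `k * m`
  have hkm2 : ‖k * m‖ * ‖k * m‖ ≤ ‖m‖ * (2 * δ) := by
    have e : star (k * m) * (k * m) = star m * (m - h * (h * m)) := by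
      calc star (k * m) * (k * m) = star m * (k * k) * m := by
            simp only [star_mul, hsk]; noncomm_ring
        _ = star m * (1 - h * h) * m := by rw [hk2]
        _ = star m * (m - h * (h * m)) := by noncomm_ring
    calc ‖k * m‖ * ‖k * m‖ = ‖star (k * m) * (k * m)‖ :=
          (CStarRing.norm_star_mul_self).symm
      _ = ‖star m * (m - h * (h * m))‖ := by rw [e]
      _ ≤ ‖star m‖ * ‖m - h * (h * m)‖ := norm_mul_le _ _
      _ ≤ ‖m‖ * (2 * δ) := by
          rw [norm_star]
          exact mul_le_mul_of_nonneg_left (approx2 m dm) (norm_nonneg _)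
  have hδ2 : δ * (2 * ‖m‖ + 1) ≤ (ε / 4) ^ 2 := by
    have h' : δ ≤ (ε / 4) ^ 2 / (2 * ‖m‖ + 1) := min_le_right _ _
    rw [le_div_iff₀ (by positivity)] at h'
    exact h'
  have hkm : ‖k * m‖ ≤ ε / 4 := by
    have h1' : ‖k * m‖ * ‖k * m‖ ≤ (ε / 4) ^ 2 := by
      calc ‖k * m‖ * ‖k * m‖ ≤ ‖m‖ * (2 * δ) := hkm2
        _ ≤ δ * (2 * ‖m‖ + 1) := by nlinarith [norm_nonneg m, hδ0.le]
        _ ≤ (ε / 4) ^ 2 := hδ2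
    nlinarith [norm_nonneg (k * m), hε]
  have bE8 : ‖E8‖ ≤ ε / 4 := by
    calc ‖E8‖ ≤ ‖k * m‖ := aux_bnd1 _ hhn
      _ ≤ ε / 4 := hkm
  have bsum : ‖E6 + E7 + E8‖ ≤ δ * ‖b‖ + δ * ‖b‖ + ε / 4 := by
    calc ‖E6 + E7 + E8‖ ≤ ‖E6 + E7‖ + ‖E8‖ := norm_add_le _ _
      _ ≤ ‖E6‖ + ‖E7‖ + ‖E8‖ := by gcongr; exact norm_add_le _ _
      _ ≤ δ * ‖b‖ + δ * ‖b‖ + ε / 4 := by gcongr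
  have hδ1 : δ * (2 * (2 * ‖a‖ + 6 * ‖b‖ + 2)) ≤ ε := by
    have h' : δ ≤ ε / (2 * (2 * ‖a‖ + 6 * ‖b‖ + 2)) := min_le_left _ _
    rw [le_div_iff₀ (by positivity)] at h'
    linarith
  calc ‖star (h * a + k * b) * (h * a + k * b) - star a * a‖
      = ‖E1 + E2 + E3 + E4 + E5 + (E6 + E7 + E8) + star (E6 + E7 + E8)‖ := by
        rw [key]
    _ ≤ ‖E1 + E2 + E3 + E4 + E5 + (E6 + E7 + E8)‖ + ‖star (E6 + E7 + E8)‖ :=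
        norm_add_le _ _
    _ ≤ ‖E1 + E2 + E3 + E4 + E5‖ + ‖E6 + E7 + E8‖ + ‖star (E6 + E7 + E8)‖ := by
        gcongr; exact norm_add_le _ _
    _ ≤ ‖E1 + E2 + E3 + E4‖ + ‖E5‖ + ‖E6 + E7 + E8‖ + ‖star (E6 + E7 + E8)‖ := by
        gcongr; exact norm_add_le _ _
    _ ≤ ‖E1 + E2 + E3‖ + ‖E4‖ + ‖E5‖ + ‖E6 + E7 + E8‖ + ‖star (E6 + E7 + E8)‖ := by
        gcongr; exact norm_add_le _ _
    _ ≤ ‖E1 + E2‖ + ‖E3‖ + ‖E4‖ + ‖E5‖ + ‖E6 + E7 + E8‖ + ‖star (E6 + E7 + E8)‖ := by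
        gcongr; exact norm_add_le _ _
    _ ≤ ‖E1‖ + ‖E2‖ + ‖E3‖ + ‖E4‖ + ‖E5‖ + ‖E6 + E7 + E8‖ + ‖star (E6 + E7 + E8)‖ := by
        gcongr; exact norm_add_le _ _
    _ = ‖E1‖ + ‖E2‖ + ‖E3‖ + ‖E4‖ + ‖E5‖ + ‖E6 + E7 + E8‖ + ‖E6 + E7 + E8‖ := by
        rw [norm_star]
    _ ≤ δ * ‖a‖ + δ * ‖a‖ + δ * ‖b‖ + δ * ‖b‖ + 2 * δ
        + (δ * ‖b‖ + δ * ‖b‖ + ε / 4) + (δ * ‖b‖ + δ * ‖b‖ + ε / 4) := by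
        gcongr
    _ = δ * (2 * ‖a‖ + 6 * ‖b‖ + 2) + (ε / 4 + ε / 4) := by ring
    _ ≤ ε := by linarith
end

section
/- Let A be a unital C*-algebra containing elements s and t with s*s = t*t = a for a projection a, s s* ≤ a, t t* ≤ a, and s*t = 0. Then the elements sⁱt (i = 0, 1, 2, …) are partial isometries with initial projection a and pairwise orthogonal final projections, all dominated by a: (sⁱt)*(sⁱt) = a, (sⁱt)(sⁱt)* ≤ a, and (sⁱt)*(sʲt) = 0 for i ≠ j. -/
/-- The algebraic core of Lemma 3.7: if `s* s = t* t = a` for a projection `a`,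
`s s*` and `t t*` are subprojections of `a`, and `s* t = 0`, then the elements
`sⁱ t` are partial isometries with initial projection `a`, final projections
dominated by `a`, and pairwise orthogonal final projections. -/
theorem stmt_11 {A : Type*} [CStarAlgebra A] (a s t : A)
    (ha : IsSelfAdjoint a) (ha2 : a * a = a)
    (hs : star s * s = a) (ht : star t * t = a)
    (hs2 : a * (s * star s) = s * star s) (ht2 : a * (t * star t) = t * star t)
    (hst : star s * t = 0) :
    ∀ i : ℕ,
      star (s ^ i * t) * (s ^ i * t) = a ∧
      a * ((s ^ i * t) * star (s ^ i * t)) = (s ^ i * t) * star (s ^ i * t) ∧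
      (s ^ i * t) * star (s ^ i * t) * (s ^ i * t) = s ^ i * t ∧
      ∀ j : ℕ, i ≠ j → star (s ^ i * t) * (s ^ j * t) = 0 := by
  -- t * a = t
  have key : ∀ x : A, star x * x = a → x * a = x := by
    intro x hx
    have key0 : star (x * a - x) * (x * a - x) = 0 := by
      have e : star (x * a - x) * (x * a - x)
          = a * (star x * x) * a - a * (star x * x) - (star x * x) * a + star x * x := by
        simp only [star_sub, star_mul, ha.star_eq]
        noncomm_ring
      rw [e, hx]
      simp only [ha2]
      abel
    have := (CStarRing.star_mul_self_eq_zero_iff _).mp key0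
    exact sub_eq_zero.mp this
  have hta : t * a = t := key t ht
  have hsa : s * a = s := key s hs
  have htt : t * star t * t = t := by rw [mul_assoc, ht, hta]
  have hss : s * star s * s = s := by rw [mul_assoc, hs, hsa]
  have hat : a * t = t := by
    calc a * t = a * (t * star t * t) := by rw [htt]
    _ = (a * (t * star t)) * t := by noncomm_ring
    _ = t * star t * t := by rw [ht2]
    _ = t := htt
  have has : a * s = s := by
    calc a * s = a * (s * star s * s) := by rw [hss]
    _ = (a * (s * star s)) * s := by noncomm_ring
    _ = s * star s * s := by rw [hs2]
    _ = s := hss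
  have h_ast : ∀ n : ℕ, a * (s ^ n * t) = s ^ n * t := by
    intro n
    induction n with
    | zero => simpa using hat
    | succ n ih =>
      rw [pow_succ', mul_assoc s, ← mul_assoc a, has]
  have h_init : ∀ n : ℕ, star (s ^ n) * (s ^ n * t) = t := by
    intro n
    induction n with
    | zero => simp
    | succ n ih =>
      rw [pow_succ', star_mul, mul_assoc (star (s ^ n)), mul_assoc s,
        ← mul_assoc (star s), hs, h_ast, ih]
  have hts : star t * s = 0 := by
    have : star (star s * t) = 0 := by rw [hst, star_zero]
    simpa [star_mul] using this
  have h_perp : ∀ i k : ℕ, star (s ^ i * t) * (s ^ (i + k + 1) * t) = 0 := by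
    intro i
    induction i with
    | zero =>
      intro k
      simp only [Nat.zero_add, pow_zero, one_mul, pow_succ']
      rw [mul_assoc s, ← mul_assoc (star t), hts, zero_mul]
    | succ i ih =>
      intro k
      have e1 : i + 1 + k + 1 = (i + k + 1) + 1 := by omega
      rw [e1, pow_succ' s (i + k + 1), pow_succ' s i]
      have e2 : star (s * s ^ i * t) * (s * s ^ (i + k + 1) * t)
          = star (s ^ i * t) * ((star s * s) * (s ^ (i + k + 1) * t)) := by
        simp only [star_mul]
        noncomm_ring
      rw [e2, hs, h_ast]
      exact ih k
  intro i
  refine ⟨?_, ?_, ?_, ?_⟩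
  · rw [star_mul, mul_assoc, h_init, ht]
  · rw [← mul_assoc, h_ast i]
  · have h1 : star (s ^ i * t) * (s ^ i * t) = a := by
      rw [star_mul, mul_assoc, h_init, ht]
    rw [mul_assoc (s ^ i * t), h1, mul_assoc, hta]
  · intro j hij
    rcases Nat.lt_or_ge i j with h | h
    · have : j = i + (j - i - 1) + 1 := by omega
      rw [this]; exact h_perp i _
    · have : i = j + (i - j - 1) + 1 := by omega
      have h0 := h_perp j (i - j - 1)
      rw [← this] at h0
      calc star (s ^ i * t) * (s ^ j * t)
          = star (star (s ^ j * t) * (s ^ i * t)) := by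
            simp [star_mul, mul_assoc]
      _ = 0 := by rw [h0, star_zero]
end

section
/- Let A be a unital C*-algebra, p ∈ A a projection, and t₁, t₂, …, t_m ∈ A isometries relative to p in the sense t_j* t_j = 1 and t_j t_j* ≤ p with t_i* t_j = 0 for i ≠ j. Let U ∈ M_m(A) be a unitary. Set t = (t₁,…,t_m) viewed as a 1×m row over A. Then t*t = 1_{M_m(A)} and t t* ≤ p, and V := t U t* + p − t t* is a unitary in the corner p A p, and [V] = [U] in K₁(A). -/
/-- The algebraic content of Lemma 3.10: given isometries `t₁,…,t_m` with pairwise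
orthogonal ranges dominated by the projection `p`, and a unitary `U ∈ M_m(A)`, the
row `t = (t₁,…,t_m)` satisfies `t* t = 1` and `t t* ≤ p`, and
`V = t U t* + p − t t*` is a unitary of the corner `p A p`. -/
theorem stmt_12 {A : Type*} [CStarAlgebra A] (m : ℕ) (p : A)
    (hp : IsSelfAdjoint p) (hp2 : p * p = p)
    (t : Fin m → A) (ht : ∀ j, star (t j) * t j = 1)
    (ht2 : ∀ j, p * (t j * star (t j)) = t j * star (t j))
    (horth : ∀ i j, i ≠ j → star (t i) * t j = 0)
    (U : Matrix (Fin m) (Fin m) A) (hU : U ∈ unitary (Matrix (Fin m) (Fin m) A)) :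
    (Matrix.of (fun i j => star (t i) * t j) = (1 : Matrix (Fin m) (Fin m) A)) ∧
    p * (∑ i, t i * star (t i)) = ∑ i, t i * star (t i) ∧
    (letI V := (∑ i, ∑ j, t i * U i j * star (t j)) + p - ∑ i, t i * star (t i)
     star V * V = p ∧ V * star V = p) := by
  have hone : Matrix.of (fun i j => star (t i) * t j) = (1 : Matrix (Fin m) (Fin m) A) := by
    ext i j
    by_cases h : i = j
    · subst h; simp [ht, Matrix.one_apply]
    · simp [horth i j h, Matrix.one_apply, h]
  have hpt : ∀ j, p * t j = t j := by
    intro j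
    have h1 : p * (t j * star (t j)) * t j = (t j * star (t j)) * t j := by rw [ht2 j]
    simpa [mul_assoc, ht j] using h1
  have htp : ∀ j, star (t j) * p = star (t j) := by
    intro j
    have := congrArg star (hpt j)
    simpa [star_mul, hp.star_eq] using this
  have cancel : ∀ (j k : Fin m) (c : A), star (t j) * (t k * c) = if j = k then c else 0 := by
    intro j k c
    by_cases h : j = k
    · subst h; rw [← mul_assoc, ht j, one_mul, if_pos rfl]
    · rw [← mul_assoc, horth j k h, zero_mul, if_neg h]
  set W : Matrix (Fin m) (Fin m) A → A := fun X => ∑ i, ∑ j, t i * X i j * star (t j) with hW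
  set P : A := ∑ i, t i * star (t i) with hPdef
  have hmul : ∀ X Y : Matrix (Fin m) (Fin m) A, W X * W Y = W (X * Y) := by
    intro X Y
    have key2 : ∀ i j k l, (t i * X i j * star (t j)) * (t k * Y k l * star (t l))
        = if j = k then t i * (X i j * Y j l) * star (t l) else 0 := by
      intro i j k l
      by_cases h : j = k
      · subst h; simp [mul_assoc, cancel]
      · simp [mul_assoc, cancel, h]
    have key3 : ∀ i j, (∑ k, ∑ l, (t i * X i j * star (t j)) * (t k * Y k l * star (t l)))
        = ∑ l, t i * (X i j * Y j l) * star (t l) := by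
      intro i j
      rw [Finset.sum_eq_single j]
      · exact Finset.sum_congr rfl fun l _ => by rw [key2, if_pos rfl]
      · intro k _ hk
        exact Finset.sum_eq_zero fun l _ => by rw [key2, if_neg (Ne.symm hk)]
      · simp
    calc W X * W Y
        = ∑ i, ∑ j, ∑ k, ∑ l, (t i * X i j * star (t j)) * (t k * Y k l * star (t l)) := by
          rw [hW]
          rw [Finset.sum_mul]
          refine Finset.sum_congr rfl fun i _ => ?_
          rw [Finset.sum_mul]
          refine Finset.sum_congr rfl fun j _ => ?_
          rw [Finset.mul_sum]
          exact Finset.sum_congr rfl fun k _ => Finset.mul_sum _ _ _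
      _ = ∑ i, ∑ j, ∑ l, t i * (X i j * Y j l) * star (t l) :=
          Finset.sum_congr rfl fun i _ => Finset.sum_congr rfl fun j _ => key3 i j
      _ = ∑ i, ∑ l, ∑ j, t i * (X i j * Y j l) * star (t l) :=
          Finset.sum_congr rfl fun i _ => Finset.sum_comm
      _ = W (X * Y) := by
          rw [hW]
          refine Finset.sum_congr rfl fun i _ => Finset.sum_congr rfl fun l _ => ?_
          rw [Matrix.mul_apply, Finset.mul_sum, Finset.sum_mul]
  have hWone : W 1 = P := by
    simp only [hW, hPdef]
    refine Finset.sum_congr rfl fun i _ => ?_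
    rw [Finset.sum_eq_single i]
    · simp
    · intro j _ hji; simp [Matrix.one_apply, Ne.symm hji]
    · simp
  have hPstar : star P = P := by
    simp [hPdef, star_sum, star_mul]
  have hpP : p * P = P := by
    rw [hPdef, Finset.mul_sum]; exact Finset.sum_congr rfl fun i _ => ht2 i
  have hPp : P * p = P := by
    rw [hPdef, Finset.sum_mul]
    exact Finset.sum_congr rfl fun i _ => by rw [mul_assoc, htp i]
  have hpW : ∀ X, p * W X = W X := by
    intro X
    simp only [hW, Finset.mul_sum, ← mul_assoc, hpt]
  have hWp : ∀ X, W X * p = W X := by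
    intro X
    simp only [hW, Finset.sum_mul, mul_assoc, htp]
  have hstarW : ∀ X, star (W X) = W (star X) := by
    intro X
    simp only [hW, star_sum, star_mul, star_star, Matrix.star_apply]
    rw [Finset.sum_comm]
    simp [mul_assoc]
  have hU1 : star U * U = 1 := hU.1
  have hU2 : U * star U = 1 := hU.2
  have hsV : star (W U + p - P) = star (W U) + p - P := by
    simp [hp.star_eq, hPstar]
  refine ⟨hone, hpP, ?_, ?_⟩
  · show star (W U + p - P) * (W U + p - P) = p
    rw [hsV]
    have e1 : star (W U) * W U = P := by rw [hstarW, hmul, hU1, hWone]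
    have e2 : star (W U) * P = star (W U) := by rw [hstarW, ← hWone, hmul, mul_one]
    have e3 : P * W U = W U := by rw [← hWone, hmul, one_mul]
    have e4 : P * P = P := by rw [← hWone, hmul, one_mul]
    have e5 : star (W U) * p = star (W U) := by rw [hstarW, hWp]
    have e6 : p * W U = W U := hpW U
    calc (star (W U) + p - P) * (W U + p - P)
        = star (W U) * W U + star (W U) * p - star (W U) * P
          + (p * W U + p * p - p * P) - (P * W U + P * p - P * P) := by noncomm_ring
      _ = p := by rw [e1, e2, e3, e4, e5, e6, hp2, hpP, hPp]; abel
  · show (W U + p - P) * star (W U + p - P) = p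
    rw [hsV]
    have e1 : W U * star (W U) = P := by rw [hstarW, hmul, hU2, hWone]
    have e2 : W U * P = W U := by rw [← hWone, hmul, mul_one]
    have e3 : P * star (W U) = star (W U) := by rw [hstarW, ← hWone, hmul, one_mul]
    have e4 : P * P = P := by rw [← hWone, hmul, one_mul]
    have e5 : p * star (W U) = star (W U) := by rw [hstarW, hpW]
    have e6 : W U * p = W U := hWp U
    calc (W U + p - P) * (star (W U) + p - P)
        = W U * star (W U) + W U * p - W U * P
          + (p * star (W U) + p * p - p * P) - (P * star (W U) + P * p - P * P) := by noncomm_ring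
      _ = p := by rw [e1, e2, e3, e4, e5, e6, hp2, hpP, hPp]; abel
end

section
/- Let B be a C*-algebra, {J_λ} a directed family of closed ideals with closure I, and π: B → B/I. Suppose A₀ = u A u* for a unital C*-algebra A = B/I and isometry u ∈ A, and suppose there exist λ and a *-homomorphism ψ₀: A₀ → B/J_λ with π ∘ ψ₀ = id_{A₀}. If moreover there is v ∈ B/J_λ with v*v = 1 and v v* = ψ₀(u u*), then ψ(x) := v* ψ₀(u x u*) v defines a *-homomorphism ψ: A → B/J_λ with π ∘ ψ = id_A. -/
/-- The final step of Theorem 3.12: given a lifting `ψ₀` of the corner `u A u*`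
along `π` and a partial isometry `v` with `v* v = 1`, `v v* = ψ₀(u u*)`, `π v = u`,
the map `ψ x = v* ψ₀(u x u*) v` is a *-homomorphism lifting the identity of `A`. -/
theorem stmt_18 {A C : Type*} [CStarAlgebra A] [CStarAlgebra C]
    (π : C →⋆ₐ[ℂ] A) (u : A) (hu : star u * u = 1)
    (ψ₀ : A → C)
    (hadd : ∀ x y : A,
      ψ₀ (u * x * star u + u * y * star u) = ψ₀ (u * x * star u) + ψ₀ (u * y * star u))
    (hmul : ∀ x y : A,
      ψ₀ ((u * x * star u) * (u * y * star u)) = ψ₀ (u * x * star u) * ψ₀ (u * y * star u))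
    (hstar : ∀ x : A, ψ₀ (star (u * x * star u)) = star (ψ₀ (u * x * star u)))
    (hsmul : ∀ (c : ℂ) (x : A), ψ₀ (c • (u * x * star u)) = c • ψ₀ (u * x * star u))
    (hlift : ∀ x : A, π (ψ₀ (u * x * star u)) = u * x * star u)
    (v : C) (hv : star v * v = 1) (hv2 : v * star v = ψ₀ (u * star u)) (hπv : π v = u) :
    letI ψ : A → C := fun x => star v * ψ₀ (u * x * star u) * v
    (∀ x y, ψ (x * y) = ψ x * ψ y) ∧
    (∀ x y, ψ (x + y) = ψ x + ψ y) ∧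
    (∀ x, ψ (star x) = star (ψ x)) ∧
    (∀ (c : ℂ) (x : A), ψ (c • x) = c • ψ x) ∧
    (∀ x, π (ψ x) = x) := by
  have key : ∀ z : A, star u * (u * z) = z := fun z => by rw [← mul_assoc, hu, one_mul]
  have hmid : ∀ y : A, ψ₀ (u * star u) * ψ₀ (u * y * star u) = ψ₀ (u * y * star u) := by
    intro y
    have h1 := hmul 1 y
    simp only [mul_one] at h1
    have h2 : u * star u * (u * y * star u) = u * y * star u := by
      rw [mul_assoc u y (star u), mul_assoc u (star u), key (y * star u), ← mul_assoc]
    rw [h2] at h1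
    exact h1.symm
  refine ⟨?_, ?_, ?_, ?_, ?_⟩
  · intro x y
    have hxy : u * (x * y) * star u = (u * x * star u) * (u * y * star u) := by
      rw [mul_assoc (u * x) (star u) (u * y * star u), mul_assoc u y (star u),
        key (y * star u)]
      noncomm_ring
    show star v * ψ₀ (u * (x * y) * star u) * v
        = (star v * ψ₀ (u * x * star u) * v) * (star v * ψ₀ (u * y * star u) * v)
    rw [hxy, hmul]
    conv_lhs => rw [← hmid y, ← hv2]
    noncomm_ring
  · intro x y
    show star v * ψ₀ (u * (x + y) * star u) * v
        = star v * ψ₀ (u * x * star u) * v + star v * ψ₀ (u * y * star u) * v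
    have : u * (x + y) * star u = u * x * star u + u * y * star u := by noncomm_ring
    rw [this, hadd]
    noncomm_ring
  · intro x
    show star v * ψ₀ (u * star x * star u) * v = star (star v * ψ₀ (u * x * star u) * v)
    have : u * star x * star u = star (u * x * star u) := by
      simp [star_mul, mul_assoc]
    rw [this, hstar]
    simp [star_mul, mul_assoc]
  · intro c x
    show star v * ψ₀ (u * (c • x) * star u) * v = c • (star v * ψ₀ (u * x * star u) * v)
    have : u * (c • x) * star u = c • (u * x * star u) := by
      rw [mul_smul_comm, smul_mul_assoc]
    rw [this, hsmul, mul_smul_comm, smul_mul_assoc]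
  · intro x
    show π (star v * ψ₀ (u * x * star u) * v) = x
    rw [map_mul, map_mul, map_star, hπv, hlift]
    rw [mul_assoc u x (star u), key (x * star u), mul_assoc, hu, mul_one]
end
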